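/- Let λ = 0 and H_RB = kX_∞ the free Rota-Baxter algebra of weight zero on X. Then for all p, q ≥ 0, H^(p) ⋄ H^(q) ⊆ H^(p+q); that is, the product ⋄ respects the total degree grading. -/

import Mathlib

open TensorProduct

universe u v

/-- Letters of Rota-Baxter bracketed words: either a variable from `X` or a
bracketed word `⌊w⌋` (a list of letters). -/
inductive RBL (X : Type u) : Type u
  | var : X → RBL X
  | br : List (RBL X) → RBL X

namespace RBL

variable {X : Type u}

/-- `a.isBr = true` iff the letter `a` is a bracketed element `⌊w⌋ ∈ ⌊X_∞⌋`. -/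
def isBr : RBL X → Bool
  | var _ => false
  | br _ => true

mutual
  /-- Validity of a letter: the inside of a bracket must be a Rota-Baxter bracketed word. -/
  def valid : RBL X → Prop
    | var _ => True
    | br l => wordValid l
  /-- `wordValid l` says that the list of letters `l` is a Rota-Baxter bracketed word,
  i.e. all letters are valid and the letters alternate (no two consecutive brackets). -/
  def wordValid : List (RBL X) → Prop
    | [] => True
    | [a] => valid a
    | a :: b :: l => valid a ∧ ¬(a.isBr = true ∧ b.isBr = true) ∧ wordValid (b :: l)
end

lemma wordValid_nil : wordValid ([] : List (RBL X)) := by simp [wordValid]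

lemma wordValid_var (x : X) : wordValid [var x] := by simp [wordValid, valid]

lemma wordValid_br {l : List (RBL X)} (h : wordValid l) : wordValid [br l] := by
  simpa [wordValid, valid] using h

mutual
  /-- The total degree of a letter. -/
  def degL : RBL X → ℕ
    | var _ => 1
    | br l => degW l + 1
  /-- The total degree of a word: the number of occurrences of brackets (i.e. of `P`)
  plus the number of occurrences of letters of `X`. -/
  def degW : List (RBL X) → ℕ
    | [] => 0
    | a :: l => degL a + degW l
end

end RBL

/-- The set `X_∞` of Rota-Baxter bracketed words on `X`. -/
def RBWord (X : Type u) : Type u := {l : List (RBL X) // RBL.wordValid l}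

namespace RBWord

variable {X : Type u}

/-- The empty word `1`. -/
def one : RBWord X := ⟨[], RBL.wordValid_nil⟩

/-- The total degree of a Rota-Baxter bracketed word. -/
def deg (w : RBWord X) : ℕ := RBL.degW w.1

end RBWord

variable (k : Type v) [CommRing k] (X : Type u)

/-- The free `k`-module `kX_∞` on the Rota-Baxter bracketed words. -/
abbrev RBMod : Type max u v := RBWord X →₀ k

variable {X}

/-- A Rota-Baxter bracketed word viewed as a basis element of `kX_∞`. -/
noncomputable def sing (w : RBWord X) : RBMod k X := Finsupp.single w 1

variable (X)

/-- The Rota-Baxter operator `P` on `kX_∞`, sending a basis word `w` to `⌊w⌋`. -/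
noncomputable def Pop : RBMod k X →ₗ[k] RBMod k X :=
  Finsupp.lmapDomain k k fun w => (⟨[RBL.br w.1], RBL.wordValid_br w.2⟩ : RBWord X)

/-- Concatenation on the left by `u₀` and on the right by `v₀`, as a linear map on `kX_∞`
(sending basis words whose concatenation is not valid to `0`; in all uses below
the concatenations are valid). -/
noncomputable def concatLR (u₀ v₀ : List (RBL X)) : RBMod k X →ₗ[k] RBMod k X :=
  Finsupp.lsum k fun w =>
    letI := Classical.dec (RBL.wordValid (u₀ ++ w.1 ++ v₀))
    if h : RBL.wordValid (u₀ ++ w.1 ++ v₀) then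
      Finsupp.lsingle (⟨u₀ ++ w.1 ++ v₀, h⟩ : RBWord X) else 0

/-- The counit `ε : kX_∞ → k`, `ε(1) = 1` and `ε(w) = 0` for basis words `w ≠ 1`. -/
noncomputable def eps : RBMod k X →ₗ[k] k := Finsupp.lapply RBWord.one

/-- The homogeneous component `H^(n)` of `kX_∞`: the span of the basis words of total
degree `n`. -/
noncomputable def Hdeg (n : ℕ) : Submodule k (RBMod k X) :=
  Finsupp.supported k k {w : RBWord X | w.deg = n}

variable (lam : k)

/-- The data of the product `⋄` on the free Rota-Baxter algebra `kX_∞` of weight `lam`,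
together with its recursive defining equations:
* if the concatenation of `u` and `v` is again a Rota-Baxter bracketed word (in particular
  if `u` or `v` is empty, or if the last letter of `u` or the first letter of `v` is a
  variable), then `u ⋄ v` is the concatenation `uv`;
* if `u = u₀⌊ā⌋` and `v = ⌊b̄⌋v₀`, then
  `u ⋄ v = u₀(⌊⌊ā⌋ ⋄ b̄⌋ + ⌊ā ⋄ ⌊b̄⌋⌋ + λ⌊ā ⋄ b̄⌋)v₀`. -/
structure FreeRBAData where
  /-- the product `⋄`, as a `k`-bilinear map -/
  d : RBMod k X →ₗ[k] RBMod k X →ₗ[k] RBMod k X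
  d_concat : ∀ (u v : RBWord X) (h : RBL.wordValid (u.1 ++ v.1)),
    d (sing k u) (sing k v) = sing k ⟨u.1 ++ v.1, h⟩
  d_br : ∀ (u₀ v₀ : List (RBL X)) (a b : RBWord X)
    (hu : RBL.wordValid (u₀ ++ [RBL.br a.1])) (hv : RBL.wordValid (RBL.br b.1 :: v₀)),
    d (sing k ⟨u₀ ++ [RBL.br a.1], hu⟩) (sing k ⟨RBL.br b.1 :: v₀, hv⟩)
      = concatLR k X u₀ v₀
          (Pop k X (d (Pop k X (sing k a)) (sing k b))
            + Pop k X (d (sing k a) (Pop k X (sing k b)))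
            + lam • Pop k X (d (sing k a) (sing k b)))

namespace FreeRBAData

variable {k X lam}

/-- The componentwise product `⋄ ⊗ ⋄` on `kX_∞ ⊗ kX_∞`. -/
noncomputable def mulT (D : FreeRBAData k X lam) :
    (RBMod k X ⊗[k] RBMod k X) →ₗ[k] (RBMod k X ⊗[k] RBMod k X) →ₗ[k]
      (RBMod k X ⊗[k] RBMod k X) :=
  TensorProduct.map₂ D.d D.d

end FreeRBAData

/-- The free Rota-Baxter algebra `kX_∞` of weight `lam` together with the coproduct `Δ`,
characterized by its recursive defining equations:
`Δ(1) = 1 ⊗ 1`, `Δ(x) = x ⊗ 1 + 1 ⊗ x` for `x ∈ X`,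
`Δ(⌊w⌋) = ⌊w⌋ ⊗ 1 + (id ⊗ P)Δ(w)`, and
`Δ(w₁ ⋄ ⋯ ⋄ w_m) = Δ(w₁) ⋄ ⋯ ⋄ Δ(w_m)` for the `⋄`-factorization of a word into its
(alternating) sequence of letters. -/
structure FreeRBBialgData extends FreeRBAData k X lam where
  /-- the coproduct `Δ` -/
  Dl : RBMod k X →ₗ[k] (RBMod k X ⊗[k] RBMod k X)
  Dl_one : Dl (sing k RBWord.one) = sing k RBWord.one ⊗ₜ[k] sing k RBWord.one
  Dl_var : ∀ (x : X),
    Dl (sing k ⟨[RBL.var x], RBL.wordValid_var x⟩)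
      = sing k ⟨[RBL.var x], RBL.wordValid_var x⟩ ⊗ₜ[k] sing k RBWord.one
        + sing k RBWord.one ⊗ₜ[k] sing k ⟨[RBL.var x], RBL.wordValid_var x⟩
  Dl_br : ∀ w : RBWord X,
    Dl (Pop k X (sing k w))
      = Pop k X (sing k w) ⊗ₜ[k] sing k RBWord.one
        + TensorProduct.map LinearMap.id (Pop k X) (Dl (sing k w))
  Dl_cons : ∀ (a : RBL X) (l : List (RBL X)) (h : RBL.wordValid (a :: l))
    (ha : RBL.wordValid [a]) (hl : RBL.wordValid l), l ≠ [] →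
    Dl (sing k ⟨a :: l, h⟩)
      = TensorProduct.map₂ d d (Dl (sing k ⟨[a], ha⟩)) (Dl (sing k ⟨l, hl⟩))

namespace RBL

variable {X : Type u}

lemma wordValid_map_var (s : List X) : wordValid (s.map RBL.var) := by
  induction s with
  | nil => exact wordValid_nil
  | cons a t ih =>
    cases t with
    | nil => exact wordValid_var a
    | cons b t' =>
      simp only [List.map_cons] at ih ⊢
      exact ⟨by simp [valid], by simp [isBr], ih⟩

end RBL

variable {X}

/-- The word `x₁ ⋯ x_m ∈ M(X)` as a basis element of `kX_∞`. -/
noncomputable def varWord (s : List X) : RBMod k X :=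
  sing k ⟨s.map RBL.var, RBL.wordValid_map_var s⟩

/-- A letter in `X ∪ ⌊X_∞⌋`, viewed as a basis element of `kX_∞` (invalid letters are
sent to `0`; they do not occur below). -/
noncomputable def letterMod (a : RBL X) : RBMod k X :=
  letI := Classical.dec (RBL.wordValid [a])
  if h : RBL.wordValid [a] then sing k ⟨[a], h⟩ else 0

variable (X)

/-- The tensor product `H^(p) ⊗ H^(q)` of homogeneous components, as a submodule of
`kX_∞ ⊗ kX_∞`. -/
noncomputable def HdegT (p q : ℕ) : Submodule k (RBMod k X ⊗[k] RBMod k X) :=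
  Submodule.map₂ (TensorProduct.mk k (RBMod k X) (RBMod k X)) (Hdeg k X p) (Hdeg k X q)

namespace FreeRBAData

variable {k X lam}

/-- The `⋄`-product `w₁ ⋄ (w₂ ⋄ (⋯ ⋄ (w_m ⋄ 1)))` of a sequence of letters. -/
noncomputable def prodList (D : FreeRBAData k X lam) (l : List (RBL X)) : RBMod k X :=
  l.foldr (fun a acc => D.d (letterMod k a) acc) (sing k RBWord.one)

end FreeRBAData

/-! The only non-concatenating case of `⋄` is `u₀⌊a⌋ ⋄ ⌊b⌋v₀`; at weight zero it produces
`u₀⌊⌊a⌋ ⋄ b⌋v₀ + u₀⌊a ⋄ ⌊b⌋⌋v₀`, where each of the two inner products has total degree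
`deg a + deg b + 1` and the outer bracket adds one more (the weight term `λu₀⌊a ⋄ b⌋v₀`
would fall one degree short), so by induction on `deg u + deg v` every product of basis
words is homogeneous of degree `deg u + deg v`.
The claim then extends bilinearly from basis words to `H^(p) × H^(q)`. -/

namespace RBL

variable {X : Type u}

lemma degW_append (l₁ l₂ : List (RBL X)) : degW (l₁ ++ l₂) = degW l₁ + degW l₂ := by
  induction l₁ with
  | nil => simp [degW]
  | cons a l ih => simp only [List.cons_append, degW, ih, Nat.add_assoc]

lemma valid_of_wordValid_cons {a : RBL X} {l : List (RBL X)} (h : wordValid (a :: l)) :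
    valid a := by
  cases l with
  | nil => exact h
  | cons b l => exact h.1

lemma wordValid_of_wordValid_cons {a : RBL X} {l : List (RBL X)} (h : wordValid (a :: l)) :
    wordValid l := by
  cases l with
  | nil => exact wordValid_nil
  | cons b l => exact h.2.2

lemma valid_of_wordValid_concat {l : List (RBL X)} {a : RBL X} (h : wordValid (l ++ [a])) :
    valid a := by
  induction l with
  | nil => exact h
  | cons c l ih => exact ih (wordValid_of_wordValid_cons h)

lemma wordValid_append_of_not_isBr {l₁ l₂ : List (RBL X)} {a b : RBL X}
    (h₁ : wordValid (l₁ ++ [a])) (h₂ : wordValid (b :: l₂))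
    (hab : ¬(a.isBr = true ∧ b.isBr = true)) :
    wordValid (l₁ ++ [a] ++ b :: l₂) := by
  induction l₁ with
  | nil => exact ⟨h₁, hab, h₂⟩
  | cons c l ih =>
    cases l with
    | nil => exact ⟨h₁.1, h₁.2.1, ih h₁.2.2⟩
    | cons d l => exact ⟨h₁.1, h₁.2.1, ih h₁.2.2⟩

lemma exists_br_br_of_not_wordValid_append {l₁ l₂ : List (RBL X)}
    (h₁ : wordValid l₁) (h₂ : wordValid l₂) (h : ¬wordValid (l₁ ++ l₂)) :
    ∃ u₀ a b v₀, l₁ = u₀ ++ [br a] ∧ l₂ = br b :: v₀ := by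
  rcases List.eq_nil_or_concat' l₁ with rfl | ⟨u₀, x, rfl⟩
  · exact absurd h₂ (by simpa using h)
  rcases l₂ with _ | ⟨y, v₀⟩
  · exact absurd h₁ (by simpa using h)
  rcases x with x | a <;> rcases y with y | b
  case br.br => exact ⟨u₀, a, b, v₀, rfl, rfl⟩
  all_goals exact absurd (wordValid_append_of_not_isBr h₁ h₂ (by simp [isBr])) h

end RBL

namespace RBWord

variable {X : Type u}

def bracket (w : RBWord X) : RBWord X := ⟨[RBL.br w.1], RBL.wordValid_br w.2⟩

lemma deg_bracket (w : RBWord X) : w.bracket.deg = w.deg + 1 := by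
  simp [bracket, deg, RBL.degW, RBL.degL]

end RBWord

section Grading

variable {k : Type v} [CommRing k] {X : Type u}

lemma Pop_sing (w : RBWord X) : Pop k X (sing k w) = sing k w.bracket :=
  Finsupp.mapDomain_single

lemma sing_mem_Hdeg {w : RBWord X} {n : ℕ} (h : w.deg = n) : sing k w ∈ Hdeg k X n :=
  Finsupp.single_mem_supported k 1 h

lemma Hdeg_eq_span (n : ℕ) :
    Hdeg k X n = Submodule.span k (sing k '' {w : RBWord X | w.deg = n}) :=
  Finsupp.supported_eq_span_single k _

lemma map_mem_Hdeg (F : RBMod k X →ₗ[k] RBMod k X) {m n : ℕ}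
    (h : ∀ w : RBWord X, w.deg = m → F (sing k w) ∈ Hdeg k X n)
    {f : RBMod k X} (hf : f ∈ Hdeg k X m) : F f ∈ Hdeg k X n := by
  suffices Hdeg k X m ≤ (Hdeg k X n).comap F from this hf
  rw [Hdeg_eq_span m, Submodule.span_le]
  rintro _ ⟨w, hw, rfl⟩
  exact h w hw

lemma map₂_mem_Hdeg (B : RBMod k X →ₗ[k] RBMod k X →ₗ[k] RBMod k X) {p q n : ℕ}
    (h : ∀ u v : RBWord X, u.deg = p → v.deg = q → B (sing k u) (sing k v) ∈ Hdeg k X n)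
    {f g : RBMod k X} (hf : f ∈ Hdeg k X p) (hg : g ∈ Hdeg k X q) : B f g ∈ Hdeg k X n := by
  refine Submodule.map₂_le.mp ?_ f hf g hg
  rw [Hdeg_eq_span p, Hdeg_eq_span q, Submodule.map₂_span_span, Submodule.span_le]
  rintro _ ⟨_, ⟨u, hu, rfl⟩, _, ⟨v, hv, rfl⟩, rfl⟩
  exact h u v hu hv

lemma Pop_mem_Hdeg {n : ℕ} {f : RBMod k X} (hf : f ∈ Hdeg k X n) :
    Pop k X f ∈ Hdeg k X (n + 1) :=
  map_mem_Hdeg _ (fun w hw => Pop_sing (k := k) w ▸ sing_mem_Hdeg (by rw [w.deg_bracket, hw])) hf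

lemma concatLR_mem_Hdeg (u₀ v₀ : List (RBL X)) {n : ℕ} {f : RBMod k X}
    (hf : f ∈ Hdeg k X n) :
    concatLR k X u₀ v₀ f ∈ Hdeg k X (RBL.degW u₀ + n + RBL.degW v₀) := by
  refine map_mem_Hdeg _ (fun w hw => ?_) hf
  rw [concatLR, sing, Finsupp.lsum_single]
  split_ifs with h
  · exact sing_mem_Hdeg (by simp only [RBWord.deg, RBL.degW_append, ← hw])
  · exact zero_mem _

theorem FreeRBAData.d_sing_mem_Hdeg (D : FreeRBAData k X (0 : k)) (u v : RBWord X) :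
    D.d (sing k u) (sing k v) ∈ Hdeg k X (u.deg + v.deg) := by
  induction hn : u.deg + v.deg using Nat.strong_induction_on generalizing u v with
  | _ n ih =>
    obtain ⟨lu, hu⟩ := u
    obtain ⟨lv, hv⟩ := v
    subst hn
    by_cases hcat : RBL.wordValid (lu ++ lv)
    · rw [D.d_concat ⟨lu, hu⟩ ⟨lv, hv⟩ hcat]
      exact sing_mem_Hdeg (RBL.degW_append lu lv)
    obtain ⟨u₀, a, b, v₀, rfl, rfl⟩ := RBL.exists_br_br_of_not_wordValid_append hu hv hcat
    have ha : RBL.wordValid a := RBL.valid_of_wordValid_concat hu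
    have hb : RBL.wordValid b := RBL.valid_of_wordValid_cons hv
    set A : RBWord X := ⟨a, ha⟩
    set B : RBWord X := ⟨b, hb⟩
    have hdeg : RBWord.deg ⟨u₀ ++ [RBL.br a], hu⟩ + RBWord.deg ⟨RBL.br b :: v₀, hv⟩
        = RBL.degW u₀ + (A.deg + B.deg + 1 + 1) + RBL.degW v₀ := by
      simp only [RBWord.deg, RBL.degW_append, RBL.degW, RBL.degL, A, B]
      omega
    have hA : D.d (sing k A.bracket) (sing k B) ∈ Hdeg k X (A.deg + B.deg + 1) :=
      ih _ (by omega) A.bracket B (by rw [A.deg_bracket, Nat.add_right_comm])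
    have hB : D.d (sing k A) (sing k B.bracket) ∈ Hdeg k X (A.deg + B.deg + 1) :=
      ih _ (by omega) A B.bracket (by rw [B.deg_bracket, Nat.add_assoc])
    rw [D.d_br u₀ v₀ A B hu hv, zero_smul, add_zero, Pop_sing, Pop_sing, hdeg]
    exact concatLR_mem_Hdeg u₀ v₀ (add_mem (Pop_mem_Hdeg hA) (Pop_mem_Hdeg hB))

end Grading

/-- In the free Rota-Baxter algebra of weight zero, the product `⋄`
respects the total degree grading: `H^(p) ⋄ H^(q) ⊆ H^(p+q)` for all `p, q ≥ 0`. -/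
theorem product_respects_grading_weight_zero
    {k : Type v} [CommRing k] {X : Type u} (D : FreeRBAData k X (0 : k))
    (p q : ℕ) (f : RBMod k X) (hf : f ∈ Hdeg k X p) (g : RBMod k X) (hg : g ∈ Hdeg k X q) :
    D.d f g ∈ Hdeg k X (p + q) :=
  map₂_mem_Hdeg D.d (fun u v hu hv => hu ▸ hv ▸ D.d_sing_mem_Hdeg u v) hf hg
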